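/- arXiv:2002.04782 — 3 statements merged into one kernel-verified Lean document; each statement's English description precedes it below -/
import Mathlib

section
/- Let A be a modal algebra in which 0 is the greatest lower bound of {◇ⁿ⊤ : n ∈ ω}. For any k ∈ ω and any x₁, …, x_k ∈ A, define g : A → A by g(c) = □(x_k ⊔ □(x_{k-1} ⊔ ⋯ □(x₂ ⊔ □(x₁ ⊔ c)) ⋯ )) (with g(c) = c when k = 0). Then g(0) is the greatest lower bound of the set {g(◇ⁿ⊤) : n ∈ ω}. -/
/-- The diamond operation `◇x = ¬□¬x` of a modal algebra. -/
def diaA {A : Type} [BooleanAlgebra A] (box : A → A) (x : A) : A := (box xᶜ)ᶜ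

/-- `dianA box n = ◇ⁿ⊤`. -/
def dianA {A : Type} [BooleanAlgebra A] (box : A → A) : ℕ → A
  | 0 => ⊤
  | n+1 => diaA box (dianA box n)

/-- `nest box [x₁, …, x_k] c = □(x_k ⊔ □(x_{k-1} ⊔ ⋯ □(x₂ ⊔ □(x₁ ⊔ c)) ⋯ ))`,
defined by `nest box [] c = c` and `nest box (xs ++ [x]) c = □(x ⊔ nest box xs c)`. -/
def nest {A : Type} [BooleanAlgebra A] (box : A → A) (l : List A) (c : A) : A :=
  l.foldl (fun acc x => box (x ⊔ acc)) c

/-!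
Writing `g = nest box l` and `k = l.length`, the key estimate is `g a \ g b ≤ ◇ᵏ (a \ b)`, obtained
by iterating `□p \ □q ≤ ◇(p \ q)`. If `b` is below every `g (◇ⁿ⊤)`, then
`b \ g ⊥ ≤ ◇ᵏ (◇ⁿ⊤) = ◇ᵏ⁺ⁿ⊤ ≤ ◇ⁿ⊤` for all `n`, so `b \ g ⊥ = ⊥`, i.e. `b ≤ g ⊥`.
-/

section ModalAlgebra

variable {A : Type} [BooleanAlgebra A] {box : A → A}

theorem monotone_of_map_inf (hbox_inf : ∀ x y : A, box (x ⊓ y) = box x ⊓ box y) :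
    Monotone box := fun x y h => by
  rw [← inf_eq_left.2 h, hbox_inf]
  exact inf_le_right

theorem diaA_monotone (hmono : Monotone box) : Monotone (diaA box) :=
  fun _ _ h => compl_le_compl (hmono (compl_le_compl h))

theorem dianA_eq_iterate (n : ℕ) : dianA box n = (diaA box)^[n] ⊤ := by
  induction n with
  | zero => rfl
  | succ n ih => rw [Function.iterate_succ_apply', ← ih]; rfl

theorem dianA_antitone (hmono : Monotone box) : Antitone (dianA box) :=
  antitone_nat_of_succ_le fun n => by
    rw [dianA_eq_iterate, dianA_eq_iterate, Function.iterate_succ_apply]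
    exact (diaA_monotone hmono).iterate n le_top

theorem box_sdiff_box_le (hbox_inf : ∀ x y : A, box (x ⊓ y) = box x ⊓ box y) (p q : A) :
    box p \ box q ≤ diaA box (p \ q) := by
  have h : box p ⊓ box (p \ q)ᶜ ≤ box q := by
    rw [← hbox_inf]
    refine monotone_of_map_inf hbox_inf ?_
    rw [compl_sdiff]
    exact inf_himp_le
  rwa [diaA, sdiff_le_iff, ← himp_eq, le_himp_iff]

theorem nest_monotone (hmono : Monotone box) (l : List A) : Monotone (nest box l) := by
  induction l with
  | nil => exact monotone_id
  | cons x xs ih => exact fun c d h => ih (hmono (sup_le_sup_left h x))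

theorem nest_sdiff_nest_le (hbox_inf : ∀ x y : A, box (x ⊓ y) = box x ⊓ box y)
    (l : List A) (a b : A) :
    nest box l a \ nest box l b ≤ (diaA box)^[l.length] (a \ b) := by
  induction l generalizing a b with
  | nil => exact le_rfl
  | cons x xs ih =>
    have hdia := diaA_monotone (monotone_of_map_inf hbox_inf)
    calc nest box xs (box (x ⊔ a)) \ nest box xs (box (x ⊔ b))
        ≤ (diaA box)^[xs.length] (box (x ⊔ a) \ box (x ⊔ b)) := ih _ _
      _ ≤ (diaA box)^[xs.length] (diaA box ((x ⊔ a) \ (x ⊔ b))) :=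
          hdia.iterate _ (box_sdiff_box_le hbox_inf _ _)
      _ ≤ (diaA box)^[xs.length] (diaA box (a \ b)) := by
          refine hdia.iterate _ (hdia (sdiff_le_iff.2 ?_))
          rw [sup_assoc]
          exact sup_le_sup_left le_sup_sdiff x
      _ = (diaA box)^[(x :: xs).length] (a \ b) :=
          (Function.iterate_succ_apply _ _ _).symm

end ModalAlgebra

theorem stmt2_general {A : Type} [BooleanAlgebra A] (box : A → A)
    (hbox_inf : ∀ x y : A, box (x ⊓ y) = box x ⊓ box y)
    (hglb : IsGLB (Set.range fun n : ℕ => dianA box n) (⊥ : A))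
    (l : List A) :
    IsGLB (Set.range fun n : ℕ => nest box l (dianA box n)) (nest box l (⊥ : A)) := by
  have hmono := monotone_of_map_inf hbox_inf
  refine ⟨Set.forall_mem_range.2 fun n => nest_monotone hmono l bot_le, fun b hb => ?_⟩
  have hdiff : ∀ n, b \ nest box l ⊥ ≤ dianA box n := fun n =>
    calc b \ nest box l ⊥ ≤ nest box l (dianA box n) \ nest box l ⊥ :=
          sdiff_le_sdiff_right (hb ⟨n, rfl⟩)
      _ ≤ (diaA box)^[l.length] (dianA box n \ ⊥) := nest_sdiff_nest_le hbox_inf l _ _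
      _ = dianA box (l.length + n) := by
          rw [sdiff_bot, dianA_eq_iterate, dianA_eq_iterate, Function.iterate_add_apply]
      _ ≤ dianA box n := dianA_antitone hmono (Nat.le_add_left n l.length)
  exact sdiff_eq_bot_iff.1 (le_bot_iff.1 (hglb.2 (Set.forall_mem_range.2 hdiff)))

theorem stmt2 {A : Type} [BooleanAlgebra A] (box : A → A)
    (hbox_top : box ⊤ = ⊤) (hbox_inf : ∀ x y : A, box (x ⊓ y) = box x ⊓ box y)
    (hglb : IsGLB (Set.range fun n : ℕ => dianA box n) (⊥ : A))
    (l : List A) :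
    IsGLB (Set.range fun n : ℕ => nest box l (dianA box n)) (nest box l (⊥ : A)) :=
  stmt2_general box hbox_inf hglb l
end

section
/- Let A be a modal algebra such that □x ≤ □□x holds for every x ∈ A and such that 0 is the greatest lower bound of {◇ⁿ⊤ : n ∈ ω}. Then the non-compactness rule is true at A. (Hence 𝔄_◇ ⊆ 𝔄_nc.) -/
/-- Modal formulas over a countable set of propositional variables. -/
inductive Fml : Type where
  | prop : ℕ → Fml
  | top : Fml
  | and : Fml → Fml → Fml
  | neg : Fml → Fml
  | box : Fml → Fml

namespace Fml
/-- `⊥` abbreviates `¬⊤`. -/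
def bot : Fml := neg top
/-- `φ ∨ ψ` abbreviates `¬(¬φ ∧ ¬ψ)`. -/
def or (φ ψ : Fml) : Fml := neg (and (neg φ) (neg ψ))
/-- `φ ⊃ ψ` abbreviates `¬(φ ∧ ¬ψ)`. -/
def imp (φ ψ : Fml) : Fml := neg (and φ (neg ψ))
/-- `◇φ` abbreviates `¬□¬φ`. -/
def dia (φ : Fml) : Fml := neg (box (neg φ))
/-- `◇ⁿφ`: n-fold application of `◇`. -/
def dian : ℕ → Fml → Fml
  | 0, φ => φ
  | n+1, φ => dia (dian n φ)
end Fml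

/-- Valuation of modal formulas in a modal algebra. -/
def aval {A : Type} [BooleanAlgebra A] (box : A → A) (v : ℕ → A) : Fml → A
  | .prop n => v n
  | .top => ⊤
  | .and φ ψ => aval box v φ ⊓ aval box v ψ
  | .neg φ => (aval box v φ)ᶜ
  | .box φ => box (aval box v φ)

/-- A formula is true at a modal algebra if it evaluates to `⊤` under every valuation. -/
def ATrue {A : Type} [BooleanAlgebra A] (box : A → A) (φ : Fml) : Prop :=
  ∀ v : ℕ → A, aval box v φ = ⊤

/-- The non-compactness rule is true at a modal algebra: for every formula `φ`,
if `φ ⊃ ◇ⁿ⊤` is true at the algebra for every `n`, then `φ ⊃ ⊥` is true at it. -/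
def NCRule {A : Type} [BooleanAlgebra A] (box : A → A) : Prop :=
  ∀ φ : Fml, (∀ n : ℕ, ATrue box (Fml.imp φ (Fml.dian n Fml.top))) →
    ATrue box (Fml.imp φ Fml.bot)

section Valuation

variable {A : Type} [BooleanAlgebra A] (box : A → A) (v : ℕ → A)

lemma aval_imp_eq_top_iff (φ ψ : Fml) :
    aval box v (φ.imp ψ) = ⊤ ↔ aval box v φ ≤ aval box v ψ := by
  simp only [Fml.imp, aval, compl_eq_top, ← sdiff_eq, sdiff_eq_bot_iff]

lemma aval_bot : aval box v Fml.bot = ⊥ := by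
  simp only [Fml.bot, aval, compl_top]

lemma aval_dian_top : ∀ n : ℕ, aval box v (Fml.dian n Fml.top) = dianA box n
  | 0 => rfl
  | n + 1 => by
    simp only [Fml.dian, Fml.dia, aval, dianA, diaA, aval_dian_top n]

end Valuation

theorem stmt9_general {A : Type} [BooleanAlgebra A] (box : A → A)
    (hglb : IsGLB (Set.range fun n : ℕ => dianA box n) (⊥ : A)) :
    NCRule box := by
  intro φ hφ v
  rw [aval_imp_eq_top_iff, aval_bot]
  refine hglb.2 ?_
  rintro _ ⟨n, rfl⟩
  simpa only [aval_imp_eq_top_iff, aval_dian_top] using hφ n v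

theorem stmt9 {A : Type} [BooleanAlgebra A] (box : A → A)
    (hbox_top : box ⊤ = ⊤) (hbox_inf : ∀ x y : A, box (x ⊓ y) = box x ⊓ box y)
    (htrans : ∀ x : A, box x ≤ box (box x))
    (hglb : IsGLB (Set.range fun n : ℕ => dianA box n) (⊥ : A)) :
    NCRule box :=
  stmt9_general box hglb
end

section
/- Let φ be the modal formula □(p∧□p⊃q)∨□(q∧□q⊃p) for distinct propositional variables p, q. Then for any Kripke frame (W,R) and any x ∈ W: φ is true at x under every valuation v : Prop → P(W) if and only if for all y, z ∈ W with (x,y) ∈ R, (x,z) ∈ R and y ≠ z, one has (y,z) ∈ R or (z,y) ∈ R. -/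
/-- Truth of a modal formula at a world of a Kripke model `(W, R, v)`. -/
def Truth {W : Type} (R : W → W → Prop) (v : ℕ → Set W) : Fml → W → Prop
  | .prop n, w => w ∈ v n
  | .top, _ => True
  | .and φ ψ, w => Truth R v φ w ∧ Truth R v ψ w
  | .neg φ, w => ¬ Truth R v φ w
  | .box φ, w => ∀ w', R w w' → Truth R v φ w'

/-- The formula `□(p ∧ □p ⊃ q) ∨ □(q ∧ □q ⊃ p)` with `p = prop 0`, `q = prop 1`. -/
def fml14 : Fml :=
  Fml.or
    (Fml.box (Fml.imp (Fml.and (Fml.prop 0) (Fml.box (Fml.prop 0))) (Fml.prop 1)))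
    (Fml.box (Fml.imp (Fml.and (Fml.prop 1) (Fml.box (Fml.prop 1))) (Fml.prop 0)))

namespace Fml

def weakConnectedness (φ ψ : Fml) : Fml :=
  .or (.box (.imp (.and φ (.box φ)) ψ)) (.box (.imp (.and ψ (.box ψ)) φ))

theorem fml14_eq : fml14 = weakConnectedness (prop 0) (prop 1) := rfl

end Fml

open Fml

def WeaklyConnectedAt {W : Type} (R : W → W → Prop) (x : W) : Prop :=
  ∀ y z : W, R x y → R x z → y ≠ z → R y z ∨ R z y

section
variable {W : Type} (R : W → W → Prop) (v : ℕ → Set W)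

@[simp]
theorem truth_or (φ ψ : Fml) (w : W) :
    Truth R v (.or φ ψ) w ↔ Truth R v φ w ∨ Truth R v ψ w := by
  simp only [Fml.or, Truth]
  tauto

@[simp]
theorem truth_imp (φ ψ : Fml) (w : W) :
    Truth R v (.imp φ ψ) w ↔ (Truth R v φ w → Truth R v ψ w) := by
  simp only [Fml.imp, Truth]
  tauto

theorem truth_weakConnectedness_iff (φ ψ : Fml) (x : W) :
    Truth R v (weakConnectedness φ ψ) x ↔
      (∀ y, R x y → Truth R v φ y → (∀ w, R y w → Truth R v φ w) → Truth R v ψ y) ∨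
      (∀ z, R x z → Truth R v ψ z → (∀ w, R z w → Truth R v ψ w) → Truth R v φ z) := by
  simp only [weakConnectedness, truth_or, truth_imp, Truth, and_imp]

variable {R} {x : W}

theorem truth_weakConnectedness_of_weaklyConnectedAt (hR : WeaklyConnectedAt R x) (φ ψ : Fml) :
    Truth R v (weakConnectedness φ ψ) x := by
  rw [truth_weakConnectedness_iff]
  by_contra! ⟨⟨y, hxy, hφy, hφy', hψy⟩, ⟨z, hxz, hψz, hψz', hφz⟩⟩
  have hyz : y ≠ z := by rintro rfl; exact hφz hφy
  rcases hR y z hxy hxz hyz with hyz | hzy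
  · exact hφz (hφy' z hyz)
  · exact hψy (hψz' y hzy)

/-- The countermodel makes `p` false exactly at `z` and `q` false exactly at `y`. -/
theorem weaklyConnectedAt_of_forall_truth_weakConnectedness {m n : ℕ} (hmn : m ≠ n)
    (h : ∀ v : ℕ → Set W, Truth R v (weakConnectedness (prop m) (prop n)) x) :
    WeaklyConnectedAt R x := by
  intro y z hxy hxz hyz
  by_contra! ⟨hnyz, hnzy⟩
  let v : ℕ → Set W := fun k => if k = m then {z}ᶜ else {y}ᶜ
  have hvm : v m = {z}ᶜ := if_pos rfl
  have hvn : v n = {y}ᶜ := if_neg hmn.symm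
  rcases (truth_weakConnectedness_iff R v _ _ x).1 (h v) with hp | hq
  · have hy : y ∈ v n := hp y hxy (by simpa [Truth, hvm] using hyz) fun w hyw => by
      simp only [Truth, hvm, Set.mem_compl_singleton_iff]
      rintro rfl
      exact hnyz hyw
    simp [hvn] at hy
  · have hz : z ∈ v m := hq z hxz (by simpa [Truth, hvn] using hyz.symm) fun w hzw => by
      simp only [Truth, hvn, Set.mem_compl_singleton_iff]
      rintro rfl
      exact hnzy hzw
    simp [hvm] at hz

end

theorem stmt14_general {W : Type} (R : W → W → Prop) (x : W) :
    (∀ v : ℕ → Set W, Truth R v fml14 x) ↔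
      (∀ y z : W, R x y → R x z → y ≠ z → R y z ∨ R z y) := by
  rw [fml14_eq]
  exact ⟨weaklyConnectedAt_of_forall_truth_weakConnectedness zero_ne_one,
    fun hR v => truth_weakConnectedness_of_weaklyConnectedAt v hR _ _⟩

theorem stmt14 {W : Type} [Nonempty W] (R : W → W → Prop) (x : W) :
    (∀ v : ℕ → Set W, Truth R v fml14 x) ↔
      (∀ y z : W, R x y → R x z → y ≠ z → R y z ∨ R z y) :=
  stmt14_general R x
end
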